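/- Let L be a local field of characteristic p with maximal ideal 𝔭_L, and let U_L^r = 1 + 𝔭_L^r for r > 0. Let Ū_L^r denote the image of U_L^r in Lˣ/(Lˣ)^p. Then Ū_L^{ip} = Ū_L^{ip+1} for every i > 0, and for every r > 0 with p ∤ r the quotient Ū_L^r / Ū_L^{r+1} is isomorphic to the additive group of the residue field l. -/

import Mathlib

/-- Coefficients of a product of Laurent series vanish below the sum of the
vanishing bounds of the factors. -/
theorem mulcoeff_aux {l : Type} [Field l] (x y : LaurentSeries l) (a b n : ℤ)
    (hx : ∀ m : ℤ, m < a → x.coeff m = 0) (hy : ∀ m : ℤ, m < b → y.coeff m = 0)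
    (hn : n < a + b) : (x * y).coeff n = 0 := by
  rw [HahnSeries.coeff_mul]
  apply Finset.sum_eq_zero
  rintro ⟨i, j⟩ hij
  rw [Finset.mem_addAntidiagonal] at hij
  obtain ⟨hi, hj, hijn⟩ := hij
  have hia : a ≤ i := not_lt.1 fun h => hi (hx i h)
  have hjb : b ≤ j := not_lt.1 fun h => hj (hy j h)
  exact absurd hn (not_lt.2 (hijn ▸ add_le_add hia hjb))

/-- The higher unit group `U_L^r = 1 + 𝔭_L^r` of `L = l((s))` (for `r ≥ 1`), as a
subgroup of `Lˣ`. -/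
def Usub (l : Type) [Field l] (r : ℕ) (hr : 0 < r) : Subgroup (LaurentSeries l)ˣ where
  carrier := {u | ∀ n : ℤ, n < (r : ℤ) → ((u : LaurentSeries l) - 1).coeff n = 0}
  one_mem' := by intro n hn; simp
  mul_mem' := by
    intro u v hu hv n hn
    have key : ((u * v : (LaurentSeries l)ˣ) : LaurentSeries l) - 1
        = (((u : LaurentSeries l) - 1) * ((v : LaurentSeries l) - 1))
          + (((u : LaurentSeries l) - 1) + ((v : LaurentSeries l) - 1)) := by
      rw [Units.val_mul]; ring
    rw [key, HahnSeries.coeff_add, HahnSeries.coeff_add,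
      mulcoeff_aux _ _ (r : ℤ) (r : ℤ) n hu hv
        (lt_of_lt_of_le hn (by exact_mod_cast Nat.le_add_left r r)),
      hu n hn, hv n hn]
    ring
  inv_mem' := by
    intro u hu n hn
    set w : LaurentSeries l := (u : LaurentSeries l) with hwdef
    set a : LaurentSeries l := ((u⁻¹ : (LaurentSeries l)ˣ) : LaurentSeries l) with hadef
    have hw0 : w ≠ 0 := Units.ne_zero u
    have ha0 : a ≠ 0 := Units.ne_zero _
    have haw : a * w = 1 := by rw [hwdef, hadef]; exact_mod_cast u.inv_mul
    have hwneg : ∀ m : ℤ, m < 0 → w.coeff m = 0 := by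
      intro m hm
      have h : w = (w - 1) + 1 := by ring
      rw [h, HahnSeries.coeff_add, hu m (lt_of_lt_of_le hm (by exact_mod_cast Nat.zero_le r)),
        HahnSeries.coeff_one, if_neg (by omega)]
      simp
    have hw00 : w.coeff 0 ≠ 0 := by
      have h : w = (w - 1) + 1 := by ring
      rw [h, HahnSeries.coeff_add, hu 0 (by exact_mod_cast hr), HahnSeries.coeff_one, if_pos rfl]
      simp
    have hordw : w.order = 0 := by
      apply le_antisymm
      · by_contra h
        exact hw00 (HahnSeries.coeff_eq_zero_of_lt_order (by omega))
      · by_contra h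
        exact (mt HahnSeries.coeff_order_eq_zero.1 hw0) (hwneg w.order (by omega))
    have horda : a.order = 0 := by
      have h := HahnSeries.order_mul ha0 hw0
      rw [haw, HahnSeries.order_one, hordw, add_zero] at h
      omega
    have haneg : ∀ m : ℤ, m < 0 → a.coeff m = 0 := fun m hm =>
      HahnSeries.coeff_eq_zero_of_lt_order (by rw [horda]; exact hm)
    have key : a - 1 = (-a) * (w - 1) := by
      linear_combination haw
    rw [key]
    exact mulcoeff_aux (-a) (w - 1) 0 (r : ℤ) n
      (fun m hm => by rw [HahnSeries.coeff_neg, haneg m hm, neg_zero]) hu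
      (by omega)

instance powRangeNormal (p : ℕ) (l : Type) [Field l] :
    ((powMonoidHom p (α := (LaurentSeries l)ˣ)).range).Normal := by
  constructor
  intro n hn g
  have h : g * n * g⁻¹ = n := by
    rw [mul_comm g n, mul_assoc]
    simp
  rw [h]
  exact hn

/-- The image `Ū_L^r` of `U_L^r` in `Lˣ/(Lˣ)^p`. -/
noncomputable def Ubar (p : ℕ) (l : Type) [Field l] (r : ℕ) (hr : 0 < r) :
    Subgroup ((LaurentSeries l)ˣ ⧸
      (powMonoidHom p (α := (LaurentSeries l)ˣ)).range) :=
  (Usub l r hr).map (QuotientGroup.mk' _)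

/-! Write `Uʳ` for `Usub l r _`. The coefficient of `sʳ` in `u - 1` is a surjective
homomorphism `Uʳ → l` with kernel `Uʳ⁺¹`, since `(u - 1)(v - 1)` only starts at `s²ʳ`.
In characteristic `p` one has `wᵖ - 1 = (w - 1)ᵖ`, whose order is divisible by `p`.
Hence if `p ∣ r`, every class of `Uʳ/Uʳ⁺¹` contains a `p`-th power
`(1 + d s^(r/p))ᵖ = 1 + dᵖ sʳ` (the residue field is perfect), so `Ūʳ = Ūʳ⁺¹`; and if
`p ∤ r`, a `p`-th power lying in `Uʳ` already lies in `Uʳ⁺¹`, so the coefficient map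
descends to `Ūʳ` with kernel `Ūʳ⁺¹`. -/

instance HahnSeries.instCharP {Γ R : Type*} [AddCommMonoid Γ] [PartialOrder Γ]
    [IsOrderedCancelAddMonoid Γ] [NonAssocSemiring R] (p : ℕ) [CharP R p] :
    CharP (HahnSeries Γ R) p :=
  charP_of_injective_ringHom HahnSeries.C_injective p

theorem MonoidHom.exists_surjective_forall_eq_one_iff {G H M : Type*} [Group G] [Group H]
    [Group M] (σ : G →* H) (hσ : Function.Surjective σ) (ψ : G →* M)
    (hψ : Function.Surjective ψ) (P : H → Prop) (hP : ∀ g, ψ g = 1 ↔ P (σ g)) :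
    ∃ φ : H →* M, Function.Surjective φ ∧ ∀ h, φ h = 1 ↔ P h := by
  have hker : σ.ker ≤ ψ.ker := fun g hg => by
    rw [MonoidHom.mem_ker] at hg ⊢
    rw [hP, hg, ← map_one σ, ← hP, map_one]
  set φ := σ.liftOfSurjective hσ ⟨ψ, hker⟩
  have hφσ : ∀ g, φ (σ g) = ψ g := σ.liftOfRightInverse_comp_apply _ _ ⟨ψ, hker⟩
  refine ⟨φ, fun m => ?_, fun h => ?_⟩
  · obtain ⟨g, rfl⟩ := hψ m
    exact ⟨σ g, hφσ g⟩
  · obtain ⟨g, rfl⟩ := hσ h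
    rw [hφσ, hP]

namespace LaurentSeries

theorem coeff_pow_eq_zero_of_not_dvd {R : Type*} [CommRing R] [IsDomain R]
    (x : LaurentSeries R) (p : ℕ) {r : ℤ} (hpr : ¬ (p : ℤ) ∣ r)
    (hx : ∀ n < r, (x ^ p).coeff n = 0) : (x ^ p).coeff r = 0 := by
  rcases eq_or_ne (x ^ p) 0 with hx0 | hx0
  · rw [hx0, HahnSeries.coeff_zero]
  have hle : r ≤ (x ^ p).order :=
    not_lt.1 fun h => HahnSeries.coeff_order_eq_zero.not.2 hx0 (hx _ h)
  have hne : r ≠ (x ^ p).order := by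
    rw [HahnSeries.order_pow, nsmul_eq_mul]
    rintro rfl
    exact hpr (dvd_mul_right _ _)
  exact HahnSeries.coeff_eq_zero_of_lt_order (lt_of_le_of_ne hle hne)

end LaurentSeries

section HigherUnits

variable {l : Type} [Field l]

theorem mem_Usub_succ_iff {r : ℕ} {hr : 0 < r} (hr1 : 0 < r + 1) {u : (LaurentSeries l)ˣ}
    (hu : u ∈ Usub l r hr) :
    u ∈ Usub l (r + 1) hr1 ↔ ((u : LaurentSeries l) - 1).coeff r = 0 := by
  refine ⟨fun h => h r (by omega), fun h n hn => ?_⟩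
  rcases lt_or_eq_of_le (show n ≤ r by push_cast at hn; omega) with hn | rfl
  exacts [hu n hn, h]

theorem Usub_succ_le {r : ℕ} (hr : 0 < r) (hr1 : 0 < r + 1) :
    Usub l (r + 1) hr1 ≤ Usub l r hr :=
  fun _ hu n hn => hu n (by push_cast; omega)

theorem coeff_mul_sub_one {r : ℕ} {hr : 0 < r} {u v : (LaurentSeries l)ˣ}
    (hu : u ∈ Usub l r hr) (hv : v ∈ Usub l r hr) :
    (((u * v : (LaurentSeries l)ˣ) : LaurentSeries l) - 1).coeff r =
      ((u : LaurentSeries l) - 1).coeff r + ((v : LaurentSeries l) - 1).coeff r := by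
  have hsplit : ((u * v : (LaurentSeries l)ˣ) : LaurentSeries l) - 1 =
      ((u : LaurentSeries l) - 1) * ((v : LaurentSeries l) - 1) +
        (((u : LaurentSeries l) - 1) + ((v : LaurentSeries l) - 1)) := by
    rw [Units.val_mul]; ring
  rw [hsplit, HahnSeries.coeff_add, HahnSeries.coeff_add,
    mulcoeff_aux _ _ r r r hu hv (by omega), zero_add]

noncomputable def leadingCoeffHom (l : Type) [Field l] (r : ℕ) (hr : 0 < r) :
    Usub l r hr →* Multiplicative l :=
  MonoidHom.mk' (fun u => .ofAdd ((((u : (LaurentSeries l)ˣ) : LaurentSeries l) - 1).coeff r))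
    fun u v => by rw [← ofAdd_add, Subgroup.coe_mul, coeff_mul_sub_one u.2 v.2]

theorem leadingCoeffHom_apply {r : ℕ} {hr : 0 < r} (u : Usub l r hr) :
    leadingCoeffHom l r hr u =
      .ofAdd ((((u : (LaurentSeries l)ˣ) : LaurentSeries l) - 1).coeff r) :=
  rfl

theorem leadingCoeffHom_eq_one_iff {r : ℕ} {hr : 0 < r} (hr1 : 0 < r + 1) (u : Usub l r hr) :
    leadingCoeffHom l r hr u = 1 ↔ (u : (LaurentSeries l)ˣ) ∈ Usub l (r + 1) hr1 := by
  rw [leadingCoeffHom_apply, ofAdd_eq_one, mem_Usub_succ_iff hr1 u.2]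

noncomputable def oneAddSingle {n : ℕ} (hn : 0 < n) (c : l) : (LaurentSeries l)ˣ :=
  Units.mk0 (1 + HahnSeries.single (n : ℤ) c) fun h => by
    have h0 := congrArg (HahnSeries.coeff · 0) h
    simp [HahnSeries.coeff_single_of_ne (show (0 : ℤ) ≠ n by omega)] at h0

theorem oneAddSingle_sub_one {n : ℕ} (hn : 0 < n) (c : l) :
    ((oneAddSingle hn c : (LaurentSeries l)ˣ) : LaurentSeries l) - 1 =
      HahnSeries.single (n : ℤ) c :=
  add_sub_cancel_left _ _

theorem mem_Usub_of_sub_one_eq_single {r n : ℕ} (hr : 0 < r) (hrn : r ≤ n)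
    {u : (LaurentSeries l)ˣ} {c : l}
    (hu : (u : LaurentSeries l) - 1 = HahnSeries.single (n : ℤ) c) : u ∈ Usub l r hr :=
  fun m hm => by rw [hu, HahnSeries.coeff_single_of_ne (by omega)]

theorem leadingCoeffHom_surjective (r : ℕ) (hr : 0 < r) :
    Function.Surjective (leadingCoeffHom l r hr) := fun c =>
  ⟨⟨oneAddSingle hr c.toAdd,
      mem_Usub_of_sub_one_eq_single hr le_rfl (oneAddSingle_sub_one hr _)⟩,
    by rw [leadingCoeffHom_apply, oneAddSingle_sub_one, HahnSeries.coeff_single_same]; rfl⟩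

end HigherUnits

section CharP

variable {p : ℕ} [Fact p.Prime] {l : Type} [Field l] [CharP l p]

theorem val_pow_sub_one (w : (LaurentSeries l)ˣ) :
    ((w ^ p : (LaurentSeries l)ˣ) : LaurentSeries l) - 1 = ((w : LaurentSeries l) - 1) ^ p := by
  rw [sub_pow_char, one_pow, Units.val_pow_eq_pow_val]

theorem pow_mem_Usub_succ {r : ℕ} (hr : 0 < r) (hr1 : 0 < r + 1) (hpr : ¬ p ∣ r)
    {w : (LaurentSeries l)ˣ} (hw : w ^ p ∈ Usub l r hr) : w ^ p ∈ Usub l (r + 1) hr1 := by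
  rw [mem_Usub_succ_iff hr1 hw, val_pow_sub_one]
  refine LaurentSeries.coeff_pow_eq_zero_of_not_dvd _ p (by exact_mod_cast hpr) fun n hn => ?_
  rw [← val_pow_sub_one]
  exact hw n hn

theorem exists_pow_mem_Usub_coeff_eq [PerfectRing l p] {i : ℕ} (hip : 0 < p * i) (c : l) :
    ∃ v : (LaurentSeries l)ˣ, v ^ p ∈ Usub l (p * i) hip ∧
      (((v ^ p : (LaurentSeries l)ˣ) : LaurentSeries l) - 1).coeff (p * i : ℕ) = c := by
  obtain ⟨d, rfl⟩ := surjective_frobenius l p c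
  have hi : 0 < i := pos_of_mul_pos_right hip (Nat.zero_le p)
  have hv : ((oneAddSingle hi d ^ p : (LaurentSeries l)ˣ) : LaurentSeries l) - 1 =
      HahnSeries.single ((p * i : ℕ) : ℤ) (frobenius l p d) := by
    rw [val_pow_sub_one, oneAddSingle_sub_one, HahnSeries.single_pow, nsmul_eq_mul]
    push_cast; rfl
  exact ⟨oneAddSingle hi d, mem_Usub_of_sub_one_eq_single hip le_rfl hv,
    by rw [hv, HahnSeries.coeff_single_same]⟩

end CharP

section Ubar

variable {p : ℕ} {l : Type} [Field l]

theorem mk_mem_Ubar {r : ℕ} {hr : 0 < r} {u : (LaurentSeries l)ˣ} (hu : u ∈ Usub l r hr) :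
    (u : (LaurentSeries l)ˣ ⧸ (powMonoidHom p (α := (LaurentSeries l)ˣ)).range) ∈
      Ubar p l r hr :=
  Subgroup.mem_map_of_mem _ hu

theorem Ubar_succ_eq_of_dvd [Fact p.Prime] [CharP l p] [PerfectRing l p] {r : ℕ} (hpr : p ∣ r)
    (hr : 0 < r) (hr1 : 0 < r + 1) : Ubar p l (r + 1) hr1 = Ubar p l r hr := by
  obtain ⟨i, rfl⟩ := hpr
  refine le_antisymm (Subgroup.map_mono (Usub_succ_le hr hr1)) ?_
  rintro _ ⟨u, hu, rfl⟩
  obtain ⟨v, hvp, hcoeff⟩ :=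
    exists_pow_mem_Usub_coeff_eq hr (((u : LaurentSeries l) - 1).coeff _)
  have hquot : u * (v ^ p)⁻¹ ∈ Usub l (p * i + 1) hr1 := by
    let u' : Usub l (p * i) hr := ⟨u, hu⟩
    let vp : Usub l (p * i) hr := ⟨v ^ p, hvp⟩
    refine (leadingCoeffHom_eq_one_iff hr1 (u' * vp⁻¹)).1 ?_
    rw [map_mul, map_inv, mul_inv_eq_one, leadingCoeffHom_apply, leadingCoeffHom_apply, hcoeff]
  have hmk : QuotientGroup.mk' (powMonoidHom p (α := (LaurentSeries l)ˣ)).range (u * (v ^ p)⁻¹)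
      = QuotientGroup.mk' _ u :=
    (QuotientGroup.mk'_eq_mk' _).2 ⟨v ^ p, ⟨v, rfl⟩, inv_mul_cancel_right u _⟩
  exact hmk ▸ mk_mem_Ubar hquot

theorem mem_Usub_succ_of_mk_mem_Ubar [Fact p.Prime] [CharP l p] {r : ℕ} (hr : 0 < r)
    (hr1 : 0 < r + 1) (hpr : ¬ p ∣ r) {u : (LaurentSeries l)ˣ} (hu : u ∈ Usub l r hr)
    (h : (u : (LaurentSeries l)ˣ ⧸ (powMonoidHom p (α := (LaurentSeries l)ˣ)).range) ∈
      Ubar p l (r + 1) hr1) : u ∈ Usub l (r + 1) hr1 := by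
  obtain ⟨v, hv, hvu⟩ := h
  obtain ⟨w, hw⟩ := QuotientGroup.eq.1 hvu
  have hw' : w ^ p = v⁻¹ * u := hw
  have hwr : w ^ p ∈ Usub l r hr := hw' ▸ mul_mem (inv_mem (Usub_succ_le hr hr1 hv)) hu
  have h := mul_mem hv (pow_mem_Usub_succ hr hr1 hpr hwr)
  rwa [hw', mul_inv_cancel_left] at h

end Ubar

/-- In `L = l((s))` of characteristic `p`: `Ū_L^{ip} = Ū_L^{ip+1}` for all `i > 0`,
and for `r > 0` with `p ∤ r` the quotient `Ū_L^r/Ū_L^{r+1}` is isomorphic to the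
additive group of the residue field `l` (expressed as: there is a surjective
homomorphism `Ū_L^r → l` with kernel exactly `Ū_L^{r+1}`). -/
theorem stmt_19 (p : ℕ) (hp : p.Prime) (l : Type) [Field l] [Fintype l] [CharP l p] :
    (∀ i : ℕ, 0 < i → ∀ (h1 : 0 < i * p) (h2 : 0 < i * p + 1),
      Ubar p l (i * p) h1 = Ubar p l (i * p + 1) h2) ∧
    (∀ r : ℕ, 0 < r → ¬ p ∣ r → ∀ (h1 : 0 < r) (h2 : 0 < r + 1),
      ∃ φ : ↥(Ubar p l r h1) →* Multiplicative l, Function.Surjective φ ∧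
        ∀ u : ↥(Ubar p l r h1), φ u = 1 ↔
          (u : (LaurentSeries l)ˣ ⧸
            (powMonoidHom p (α := (LaurentSeries l)ˣ)).range)
            ∈ Ubar p l (r + 1) h2) := by
  have : Fact p.Prime := ⟨hp⟩
  refine ⟨fun i _ h1 h2 => (Ubar_succ_eq_of_dvd (dvd_mul_left p i) h1 h2).symm,
    fun r _ hpr h1 h2 => ?_⟩
  refine MonoidHom.exists_surjective_forall_eq_one_iff
    ((QuotientGroup.mk' _).subgroupMap (Usub l r h1))
    (MonoidHom.subgroupMap_surjective _ _) (leadingCoeffHom l r h1)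
    (leadingCoeffHom_surjective r h1) _ fun u => ?_
  rw [leadingCoeffHom_eq_one_iff h2]
  exact ⟨mk_mem_Ubar, mem_Usub_succ_of_mk_mem_Ubar h1 h2 hpr u.2⟩
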